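/- Let N ≥ 2, T ≥ 1, and set β = max{1/2, 1 − √((log N)/T)}. Then for any sequence of binary losses l_{t,i} ∈ {0,1}, the regret of the Randomized Weighted-Majority algorithm satisfies R_T = 𝓛_T − 𝓛_T^min ≤ 2·√(T · log N). -/

import Mathlib

open Finset Real

/-- Weight of expert `i` in the Randomized Weighted-Majority algorithm.
Rounds are indexed starting from `0`, so `rwmWeight β l i t` is the weight
`w_{t+1, i}` of the paper: the initial weight (`t = 0`) is `1`, and the weight is
multiplied by `β` each time the expert incurs a loss of `1`. -/
noncomputable def rwmWeight (β : ℝ) (l : ℕ → ℕ → ℝ) (i : ℕ) : ℕ → ℝ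
  | 0 => 1
  | t + 1 => if l t i = 1 then β * rwmWeight β l i t else rwmWeight β l i t

/-- Total weight `W_{t+1} = ∑_{i=1}^N w_{t+1, i}`. -/
noncomputable def rwmTotalWeight (β : ℝ) (l : ℕ → ℕ → ℝ) (N t : ℕ) : ℝ :=
  ∑ i ∈ Finset.range N, rwmWeight β l i t

/-- Expected loss of the RWM algorithm at round `t`:
`L_t = ∑_{i=1}^N p_{t,i} l_{t,i}` with `p_{t,i} = w_{t,i} / W_t`. -/
noncomputable def rwmRoundLoss (β : ℝ) (l : ℕ → ℕ → ℝ) (N t : ℕ) : ℝ :=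
  ∑ i ∈ Finset.range N, (rwmWeight β l i t / rwmTotalWeight β l N t) * l t i

/-- Cumulative expected loss `𝓛_T = ∑_{t=1}^T L_t` of the RWM algorithm. -/
noncomputable def rwmCumLoss (β : ℝ) (l : ℕ → ℕ → ℝ) (N T : ℕ) : ℝ :=
  ∑ t ∈ Finset.range T, rwmRoundLoss β l N t

/-- Cumulative loss `𝓛_{T,i} = ∑_{t=1}^T l_{t,i}` of expert `i`. -/
noncomputable def rwmExpertLoss (l : ℕ → ℕ → ℝ) (i T : ℕ) : ℝ :=
  ∑ t ∈ Finset.range T, l t i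

lemma rwmWeight_pos {β : ℝ} {l : ℕ → ℕ → ℝ} (hβ : 0 < β) (i t : ℕ) :
    0 < rwmWeight β l i t := by
  induction t with
  | zero => norm_num [rwmWeight]
  | succ t ih =>
    rw [rwmWeight]
    split
    · exact mul_pos hβ ih
    · exact ih

lemma rwmTotal_pos {β : ℝ} {l : ℕ → ℕ → ℝ} (hβ : 0 < β) {N : ℕ} (hN : 0 < N) (t : ℕ) :
    0 < rwmTotalWeight β l N t :=
  Finset.sum_pos (fun i _ => rwmWeight_pos hβ i t) (Finset.nonempty_range_iff.mpr hN.ne')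

lemma rwmWeight_eq_rpow {β : ℝ} {l : ℕ → ℕ → ℝ} (hβ : 0 < β) {N T : ℕ}
    (hl : ∀ t < T, ∀ i < N, l t i = 0 ∨ l t i = 1)
    {i : ℕ} (hi : i < N) : ∀ {t : ℕ}, t ≤ T →
    rwmWeight β l i t = β ^ (rwmExpertLoss l i t) := by
  intro t
  induction t with
  | zero => intro _; simp [rwmWeight, rwmExpertLoss]
  | succ t ih =>
    intro ht
    have ht' : t < T := ht
    have ihe := ih ht'.le
    rw [rwmWeight, rwmExpertLoss, Finset.sum_range_succ, ← rwmExpertLoss]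
    rcases hl t ht' i hi with h0 | h1
    · rw [if_neg (by rw [h0]; norm_num), h0, add_zero, ihe]
    · rw [if_pos h1, h1, ihe, Real.rpow_add hβ, Real.rpow_one, mul_comm]

lemma rwmTotal_le {β : ℝ} {l : ℕ → ℕ → ℝ} (hβ0 : 0 < β) {N T : ℕ} (hN : 0 < N)
    (hl : ∀ t < T, ∀ i < N, l t i = 0 ∨ l t i = 1) : ∀ {t : ℕ}, t ≤ T →
    rwmTotalWeight β l N t ≤ N * Real.exp (-(1 - β) * rwmCumLoss β l N t) := by
  intro t
  induction t with
  | zero =>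
    intro _
    have h0 : rwmTotalWeight β l N 0 = N := by
      unfold rwmTotalWeight rwmWeight
      simp
    simp [h0, rwmCumLoss]
  | succ t ih =>
    intro ht
    have ht' : t < T := ht
    have hW : 0 < rwmTotalWeight β l N t := rwmTotal_pos hβ0 hN t
    have hsum : rwmRoundLoss β l N t * rwmTotalWeight β l N t
        = ∑ i ∈ Finset.range N, rwmWeight β l i t * l t i := by
      rw [rwmRoundLoss, Finset.sum_mul]
      refine Finset.sum_congr rfl fun i _ => ?_
      field_simp
    have hrec : rwmTotalWeight β l N (t + 1)
        = rwmTotalWeight β l N t * (1 - (1 - β) * rwmRoundLoss β l N t) := by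
      have hterm : ∀ i ∈ Finset.range N, rwmWeight β l i (t + 1)
          = rwmWeight β l i t - (1 - β) * (rwmWeight β l i t * l t i) := by
        intro i hi
        rcases hl t ht' i (Finset.mem_range.mp hi) with h0 | h1
        · rw [rwmWeight, if_neg (by rw [h0]; norm_num), h0]; ring
        · rw [rwmWeight, if_pos h1, h1]; ring
      rw [rwmTotalWeight, Finset.sum_congr rfl hterm, Finset.sum_sub_distrib,
        ← Finset.mul_sum, ← hsum, ← rwmTotalWeight]
      ring
    calc rwmTotalWeight β l N (t + 1)
        = rwmTotalWeight β l N t * (1 - (1 - β) * rwmRoundLoss β l N t) := hrec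
      _ ≤ rwmTotalWeight β l N t * Real.exp (-(1 - β) * rwmRoundLoss β l N t) := by
          apply mul_le_mul_of_nonneg_left _ hW.le
          have := Real.add_one_le_exp (-(1 - β) * rwmRoundLoss β l N t)
          linarith
      _ ≤ (N * Real.exp (-(1 - β) * rwmCumLoss β l N t))
            * Real.exp (-(1 - β) * rwmRoundLoss β l N t) :=
          mul_le_mul_of_nonneg_right (ih ht'.le) (Real.exp_pos _).le
      _ = N * Real.exp (-(1 - β) * rwmCumLoss β l N (t + 1)) := by
          have hcs : rwmCumLoss β l N (t + 1) = rwmCumLoss β l N t + rwmRoundLoss β l N t :=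
            Finset.sum_range_succ _ _
          rw [hcs, mul_assoc, ← Real.exp_add]
          ring_nf

lemma neg_log_one_sub_le' {x : ℝ} (h0 : 0 ≤ x) (h2 : x ≤ 1/2) :
    -(x + x^2) ≤ Real.log (1 - x) := by
  have hx1 : (0:ℝ) < 1 - x := by linarith
  have hexp : 1 + (x + x^2) + (x + x^2)^2/2 ≤ Real.exp (x + x^2) := by
    have h := Real.sum_le_exp_of_nonneg (by positivity : (0:ℝ) ≤ x + x^2) 3
    simp [Finset.sum_range_succ, Nat.factorial] at h
    linarith
  have h1 : 1 ≤ (1 - x) * Real.exp (x + x^2) := by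
    have hm := mul_le_mul_of_nonneg_left hexp hx1.le
    nlinarith [sq_nonneg x, sq_nonneg (x*x), mul_nonneg h0 h0]
  rw [Real.le_log_iff_exp_le hx1, Real.exp_neg]
  rw [inv_le_iff_one_le_mul₀ (Real.exp_pos _)]
  linarith [mul_comm (1-x) (Real.exp (x + x^2)), h1]

/-- for `N ≥ 2`, `T ≥ 1` and `β = max {1/2, 1 − √((log N)/T)}`,
the regret `R_T = 𝓛_T − 𝓛_T^min` of RWM satisfies `R_T ≤ 2 √(T log N)`. -/
theorem rwm_regret_bound (N T : ℕ) (hN : 2 ≤ N) (hT : 1 ≤ T)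
    (β : ℝ) (hβ : β = max (1 / 2) (1 - Real.sqrt (Real.log N / T)))
    (l : ℕ → ℕ → ℝ) (hl : ∀ t < T, ∀ i < N, l t i = 0 ∨ l t i = 1) :
    rwmCumLoss β l N T -
        (Finset.range N).inf' (Finset.nonempty_range_iff.mpr (by omega))
          (fun i => rwmExpertLoss l i T)
      ≤ 2 * Real.sqrt (T * Real.log N) := by
  have hT0 : (0:ℝ) < T := by exact_mod_cast hT
  have hN1 : (1:ℝ) < N := by exact_mod_cast (by omega : 1 < N)
  have hlogN : 0 < Real.log N := Real.log_pos hN1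
  have hβhalf : (1/2 : ℝ) ≤ β := hβ ▸ le_max_left _ _
  have hβ0 : (0:ℝ) < β := by linarith
  have hNpos : 0 < N := by omega
  set s : ℝ := Real.sqrt (Real.log N / T) with hs
  have hs0 : 0 < s := Real.sqrt_pos.mpr (by positivity)
  have hssq : s ^ 2 = Real.log N / T := Real.sq_sqrt (by positivity)
  -- expert losses bounded
  have hEL : ∀ i < N, 0 ≤ rwmExpertLoss l i T ∧ rwmExpertLoss l i T ≤ T := by
    intro i hi
    constructor
    · apply Finset.sum_nonneg
      intro t ht
      rcases hl t (Finset.mem_range.mp ht) i hi with h | h <;> rw [h] <;> norm_num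
    · calc rwmExpertLoss l i T ≤ ∑ t ∈ Finset.range T, (1:ℝ) := by
            apply Finset.sum_le_sum
            intro t ht
            rcases hl t (Finset.mem_range.mp ht) i hi with h | h <;> rw [h] <;> norm_num
        _ = T := by simp
  obtain ⟨i0, hi0, hinf⟩ := Finset.exists_mem_eq_inf' (Finset.nonempty_range_iff.mpr
      (by omega : N ≠ 0)) (fun i => rwmExpertLoss l i T)
  rw [hinf]
  have hi0N : i0 < N := Finset.mem_range.mp hi0
  obtain ⟨hEL0, hELT⟩ := hEL i0 hi0N
  rcases le_or_gt s (1/2) with hcase | hcase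
  · -- main case: β = 1 - s
    have hβval : β = 1 - s := by
      rw [hβ, max_eq_right]; linarith
    have hβ1 : β ≤ 1 := by rw [hβval]; linarith
    -- combine weight bounds
    have hkey : β ^ (rwmExpertLoss l i0 T)
        ≤ N * Real.exp (-(1 - β) * rwmCumLoss β l N T) := by
      calc β ^ (rwmExpertLoss l i0 T) = rwmWeight β l i0 T :=
            (rwmWeight_eq_rpow hβ0 hl hi0N le_rfl).symm
        _ ≤ rwmTotalWeight β l N T :=
            Finset.single_le_sum (f := fun i => rwmWeight β l i T)
              (fun i _ => (rwmWeight_pos hβ0 i T).le) hi0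
        _ ≤ N * Real.exp (-(1 - β) * rwmCumLoss β l N T) := rwmTotal_le hβ0 hNpos hl le_rfl
    have hlog : rwmExpertLoss l i0 T * Real.log β
        ≤ Real.log N + (-(1 - β) * rwmCumLoss β l N T) := by
      have := Real.log_le_log (Real.rpow_pos_of_pos hβ0 _) hkey
      rwa [Real.log_rpow hβ0, Real.log_mul (by positivity) (Real.exp_pos _).ne',
        Real.log_exp] at this
    have hlogβ : -(s + s^2) ≤ Real.log β := by
      have := neg_log_one_sub_le' hs0.le hcase
      rwa [← hβval] at this
    have hmul : rwmExpertLoss l i0 T * (-(s + s^2)) ≤ rwmExpertLoss l i0 T * Real.log β :=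
      mul_le_mul_of_nonneg_left hlogβ hEL0
    -- s * (cum - expert) ≤ log N + expert * s^2 ≤ log N + T * s^2
    have hs2T : rwmExpertLoss l i0 T * s^2 ≤ T * s^2 :=
      mul_le_mul_of_nonneg_right hELT (sq_nonneg s)
    have hmain : s * (rwmCumLoss β l N T - rwmExpertLoss l i0 T)
        ≤ Real.log N + T * s^2 := by
      rw [show (1:ℝ) - β = s from by rw [hβval]; ring] at hlog
      nlinarith [hlog, hmul, hs2T]
    -- log N = T * s^2, so RHS = 2*T*s^2, dividing by s: regret ≤ 2*T*s
    have hlogeq : Real.log N = T * s^2 := by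
      rw [hssq]; field_simp
    have hregret : rwmCumLoss β l N T - rwmExpertLoss l i0 T ≤ 2 * T * s := by
      rw [hlogeq] at hmain
      have h2 : s * (rwmCumLoss β l N T - rwmExpertLoss l i0 T) ≤ s * (2 * T * s) := by
        nlinarith [hmain]
      exact le_of_mul_le_mul_left h2 hs0
    have hTs : T * s = Real.sqrt (T * Real.log N) := by
      rw [hs, show (T : ℝ) * Real.log N = (T:ℝ)^2 * (Real.log N / T) by field_simp,
        Real.sqrt_mul (sq_nonneg _), Real.sqrt_sq hT0.le]
    have h2Ts : 2 * (T:ℝ) * s = 2 * Real.sqrt (T * Real.log N) := by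
      rw [← hTs]; ring
    linarith [hregret, h2Ts]
  · -- trivial case: regret ≤ T ≤ 2 sqrt(T log N)
    have hcum : rwmCumLoss β l N T ≤ T := by
      calc rwmCumLoss β l N T ≤ ∑ t ∈ Finset.range T, (1:ℝ) := by
            apply Finset.sum_le_sum
            intro t ht
            have htT := Finset.mem_range.mp ht
            have hWpos := rwmTotal_pos (l := l) hβ0 hNpos t
            calc rwmRoundLoss β l N t
                ≤ ∑ i ∈ Finset.range N, rwmWeight β l i t / rwmTotalWeight β l N t := by
                  apply Finset.sum_le_sum
                  intro i hi
                  have hw := rwmWeight_pos (l := l) hβ0 i t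
                  rcases hl t htT i (Finset.mem_range.mp hi) with h | h <;> rw [h]
                  · simp [le_of_lt, hw, hWpos]
                  · rw [mul_one]
              _ = 1 := by
                  rw [← Finset.sum_div, ← rwmTotalWeight, div_self hWpos.ne']
        _ = T := by simp
    have hquarter : (T:ℝ) / 4 ≤ Real.log N := by
      have h14 : (1/2:ℝ)^2 < Real.log N / T := (Real.lt_sqrt (by norm_num)).mp hcase
      have h14' : (1/4:ℝ) * T < Real.log N := (lt_div_iff₀ hT0).mp (by norm_num at h14 ⊢; linarith)
      linarith
    have hTle : (T:ℝ) ≤ 2 * Real.sqrt (T * Real.log N) := by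
      have h1 : ((T:ℝ)/2)^2 ≤ T * Real.log N := by nlinarith
      have := Real.sqrt_le_sqrt h1
      rw [Real.sqrt_sq (by positivity)] at this
      linarith
    linarith [hEL0, hcum, hTle]
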